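/- arXiv:2311.15255 — 2 statements merged into one kernel-verified Lean document; each statement's English description precedes it below -/
import Mathlib

section
/- Let m < n be positive integers, F a finite field, D_k = D_k(a_1,…,a_{n−1}) for some 1 ≤ k ≤ n and a_1,…,a_{n−1} ∈ F, and let A be an element of a maximal independent set of the unitary Cayley graph Γ(M_n(F)) that contains the set 𝒟 = { D_l(b_1,…,b_{n−1}) : 1 ≤ l ≤ n, b_1,…,b_{n−1} ∈ F }. Then for any set S of m row indices, the n×n matrix whose rows indexed by S are the corresponding rows of D_k and whose remaining rows are the corresponding rows of A is not invertible. -/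
open Pointwise

/-- The unitary Cayley graph of a ring `R`: vertices are elements of `R`,
and `x`, `y` are adjacent iff `x - y` is a unit. -/
def unitaryCayley (R : Type*) [Ring R] : SimpleGraph R where
  Adj x y := x ≠ y ∧ IsUnit (x - y)
  symm := by
    refine ⟨?_⟩
    rintro x y ⟨hne, hu⟩
    exact ⟨hne.symm, by simpa [neg_sub] using hu.neg⟩
  loopless := by refine ⟨?_⟩; rintro x ⟨h, -⟩; exact h rfl

/-- A set of vertices is independent if its elements are pairwise nonadjacent. -/
def IsIndepSet {V : Type*} (G : SimpleGraph V) (A : Set V) : Prop :=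
  A.Pairwise fun x y => ¬ G.Adj x y

/-- A maximal independent set. -/
def IsMaxIndepSet {V : Type*} (G : SimpleGraph V) (A : Set V) : Prop :=
  IsIndepSet G A ∧ ∀ B : Set V, IsIndepSet G B → A ⊆ B → A = B

/-- A graph is well-covered if all its maximal independent sets have the same cardinality. -/
def WellCovered {V : Type*} (G : SimpleGraph V) : Prop :=
  ∀ A B : Set V, IsMaxIndepSet G A → IsMaxIndepSet G B → A.ncard = B.ncard

/-- The reduced `k`-diagonal matrix `D_k(a)`:  the `(i, j)` entry is `a (i - k)`
when `j = i + k` (mod `n`) and `i ≠ k`, and `0` otherwise. -/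
def Dmat {n : ℕ} (F : Type*) [Field F] (k : Fin n) (a : Fin n → F) :
    Matrix (Fin n) (Fin n) F :=
  Matrix.of fun i j => if i ≠ k ∧ j = i + k then a (i - k) else 0

/-- The family `𝒟` of all reduced diagonal matrices `D_k(a₁, …, a_{n-1})`. -/
def DSet {n : ℕ} (F : Type*) [Field F] : Set (Matrix (Fin n) (Fin n) F) :=
  {M | ∃ (k : Fin n) (a : Fin n → F), M = Dmat F k a}

/-- The Jacobson radical of a (possibly noncommutative) ring, as a two-sided ideal. -/
noncomputable def jacRad (R : Type*) [Ring R] : TwoSidedIdeal R :=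
  (⊥ : TwoSidedIdeal R).jacobson

/-- The quotient of `R` by its Jacobson radical. -/
abbrev JacQuot (R : Type*) [Ring R] := (jacRad R).ringCon.Quotient

/-- The quotient map `R → R/J(R)`. -/
noncomputable def jacMk (R : Type*) [Ring R] : R →+* JacQuot R := (jacRad R).ringCon.mk'

/-! Since `A` is adjacent to no `D_k(c)`, then `det (A + diag x · D_k(a)) = 0` for every `x`,
because the rows of `D_k(a)` scaled by arbitrary coefficients are again a `D_k(c)`. This determinant is
affine in each `x i`, so vanishing for all `x` forces every mixed determinant, with rows of `D_k(a)`
in `S` and rows of `A` elsewhere, to vanish. -/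

lemma IsIndepSet.not_isUnit_sub {R : Type*} [Ring R] [Nontrivial R] {M : Set R}
    (hM : IsIndepSet (unitaryCayley R) M) {x y : R} (hx : x ∈ M) (hy : y ∈ M) :
    ¬ IsUnit (x - y) := by
  rcases eq_or_ne x y with rfl | hne
  · simp
  · exact fun hu => hM hx hy hne ⟨hne, hu⟩

namespace Matrix

variable {n R : Type*} [Fintype n] [DecidableEq n] [CommRing R]

theorem det_ite_rows_eq_zero_of_forall_det_add_smul_rows_eq_zero (A E : Matrix n n R)
    (h : ∀ x : n → R, (of fun i => A i + x i • E i).det = 0) (S : Finset n) :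
    (of fun i => if i ∈ S then E i else A i).det = 0 := by
  suffices key : ∀ x : n → R, (of fun i => if i ∈ S then E i else A i + x i • E i).det = 0 by
    simpa using key 0
  induction S using Finset.induction_on with
  | empty => simpa using h
  | @insert i S hi ih =>
    intro x
    set N : Matrix n n R := of fun j => if j ∈ S then E j else A j + x j • E j
    have hN : ∀ t : R, (N.updateRow i (A i + t • E i)).det = 0 := fun t => by
      convert ih (Function.update x i t) using 2
      ext j : 1
      rcases eq_or_ne j i with rfl | hj
      · simp [N, hi]
      · simp [N, hj]
    -- the determinant is affine in the `i`-th coefficient, so vanishing at `0` and `1` kills its slope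
    have hE : (N.updateRow i (E i)).det = 0 := by
      have h0 : (N.updateRow i (A i)).det = 0 := by simpa using hN 0
      have h1 := hN 1
      rwa [one_smul, det_updateRow_add, h0, zero_add] at h1
    convert hE using 2
    ext j : 1
    rcases eq_or_ne j i with rfl | hj
    · simp
    · simp [N, hj]

end Matrix

section Dmat

variable {F : Type*} [Field F] {n : ℕ}

theorem Dmat_neg (k : Fin n) (a : Fin n → F) : Dmat F k (-a) = -Dmat F k a := by
  ext i j
  simp only [Dmat, Matrix.of_apply, Matrix.neg_apply, Pi.neg_apply]
  split_ifs <;> simp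

theorem smul_rows_Dmat [NeZero n] (k : Fin n) (a x : Fin n → F) :
    (Matrix.of fun i => x i • Dmat F k a i) = Dmat F k (fun j => x (j + k) * a j) := by
  ext i j
  simp only [Dmat, Matrix.of_apply, Pi.smul_apply, smul_eq_mul]
  split_ifs <;> simp

end Dmat

theorem stmt4_general (F : Type*) [Field F] (m n : ℕ) (hmn : m < n)
    (k : Fin n) (a : Fin n → F)
    (M : Set (Matrix (Fin n) (Fin n) F))
    (hM : IsMaxIndepSet (unitaryCayley (Matrix (Fin n) (Fin n) F)) M)
    (hD : DSet F ⊆ M)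
    (A : Matrix (Fin n) (Fin n) F) (hA : A ∈ M)
    (S : Finset (Fin n)) :
    ¬ IsUnit (Matrix.of fun i j => if i ∈ S then Dmat F k a i j else A i j) := by
  have : NeZero n := ⟨by omega⟩
  have hsing (x : Fin n → F) : (Matrix.of fun i => A i + x i • Dmat F k a i).det = 0 := by
    set c : Fin n → F := fun j => x (j + k) * a j
    have := hM.1.not_isUnit_sub hA (hD ⟨k, -c, rfl⟩)
    rwa [Matrix.isUnit_iff_isUnit_det, isUnit_iff_ne_zero, not_not, Dmat_neg, sub_neg_eq_add,
      ← smul_rows_Dmat] at this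
  rw [Matrix.isUnit_iff_isUnit_det, isUnit_iff_ne_zero, not_not]
  convert Matrix.det_ite_rows_eq_zero_of_forall_det_add_smul_rows_eq_zero A _ hsing S using 3
  funext i
  split_ifs <;> rfl

theorem stmt4 (F : Type*) [Field F] [Fintype F] (m n : ℕ) (hm : 0 < m) (hmn : m < n)
    (k : Fin n) (a : Fin n → F)
    (M : Set (Matrix (Fin n) (Fin n) F))
    (hM : IsMaxIndepSet (unitaryCayley (Matrix (Fin n) (Fin n) F)) M)
    (hD : DSet F ⊆ M)
    (A : Matrix (Fin n) (Fin n) F) (hA : A ∈ M)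
    (S : Finset (Fin n)) (hS : S.card = m) :
    ¬ IsUnit (Matrix.of fun i j => if i ∈ S then Dmat F k a i j else A i j) :=
  stmt4_general F m n hmn k a M hM hD A hA S
end

section
/- Let F be a finite field, n > 1 an integer, and A a nonzero matrix in M_n(F). Then there exists a non-invertible matrix B ∈ M_n(F) such that A − B is invertible. -/
open Pointwise

/-! Pick `v` with `A v ≠ 0`. Since invertible matrices act transitively on nonzero vectors, some
invertible `C` has `C v = A v`; then `A - C` kills `v`, so `B = A - C` is singular while
`A - B = C` is invertible. -/

theorem LinearEquiv.exists_apply_eq_of_ne_zero {K V : Type*} [Field K] [AddCommGroup V]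
    [Module K V] {v w : V} (hv : v ≠ 0) (hw : w ≠ 0) : ∃ g : V ≃ₗ[K] V, g v = w := by
  obtain ⟨g, hg⟩ := Submodule.exists_linearEquiv_restrict_eq
    ((coord K V v hv).trans (toSpanNonzeroSingleton K V w hw))
  exact ⟨g, by simpa [coord_self] using (hg ⟨v, Submodule.mem_span_singleton_self v⟩).symm⟩

theorem Module.End.exists_isUnit_not_isUnit_sub {K V : Type*} [Field K] [AddCommGroup V]
    [Module K V] {f : Module.End K V} (hf : f ≠ 0) :
    ∃ g : Module.End K V, IsUnit g ∧ ¬ IsUnit (f - g) := by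
  obtain ⟨v, hfv⟩ : ∃ v, f v ≠ 0 := by
    by_contra! h
    exact hf (LinearMap.ext h)
  have hv : v ≠ 0 := by
    rintro rfl
    exact hfv (map_zero f)
  obtain ⟨g, hgv⟩ := LinearEquiv.exists_apply_eq_of_ne_zero (K := K) hv hfv
  refine ⟨g, Module.End.isUnit_iff _ |>.mpr g.bijective, fun hu => hv ?_⟩
  refine (Module.End.isUnit_iff _ |>.mp hu).injective ?_
  simp [hgv]

theorem Matrix.exists_isUnit_not_isUnit_sub {ι K : Type*} [Fintype ι] [DecidableEq ι] [Field K]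
    {A : Matrix ι ι K} (hA : A ≠ 0) : ∃ C : Matrix ι ι K, IsUnit C ∧ ¬ IsUnit (A - C) := by
  let e := Matrix.toLinAlgEquiv' (R := K) (n := ι)
  obtain ⟨g, hg, hAg⟩ :=
    Module.End.exists_isUnit_not_isUnit_sub ((map_ne_zero_iff e e.injective).mpr hA)
  refine ⟨e.symm g, hg.map e.symm, fun hu => hAg ?_⟩
  simpa using hu.map e

theorem stmt10_general (F : Type*) [Field F] (n : ℕ)
    (A : Matrix (Fin n) (Fin n) F) (hA : A ≠ 0) :
    ∃ B : Matrix (Fin n) (Fin n) F, ¬ IsUnit B ∧ IsUnit (A - B) := by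
  obtain ⟨C, hC, hAC⟩ := Matrix.exists_isUnit_not_isUnit_sub hA
  exact ⟨A - C, hAC, by rwa [sub_sub_cancel]⟩

theorem stmt10 (F : Type*) [Field F] [Fintype F] (n : ℕ) (hn : 1 < n)
    (A : Matrix (Fin n) (Fin n) F) (hA : A ≠ 0) :
    ∃ B : Matrix (Fin n) (Fin n) F, ¬ IsUnit B ∧ IsUnit (A - B) :=
  stmt10_general F n A hA
end
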